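/- For every integer n with n ≥ 6 and n ≡ 2 (mod 4), the n-dimensional simplified shuffle-cube SSQ_n is Hamiltonian-connected: for any two distinct vertices u and v of SSQ_n there is a Hamiltonian path of SSQ_n joining u and v. -/

import Mathlib

/-- Vertices of the `n`-dimensional simplified shuffle-cube: binary strings of
length `n` (encoded as functions `ℕ → Bool` vanishing from position `n` on)
such that for every `j` with `1 ≤ j ≤ (n-2)/4` the bits in positions
`4j+1` and `4j` are equal. -/
def SSQVertex (n : ℕ) : Type :=
  {u : ℕ → Bool // (∀ i, n ≤ i → u i = false) ∧
    ∀ j, 1 ≤ j → j ≤ (n - 2) / 4 → u (4 * j + 1) = u (4 * j)}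

/-- The set `V₀₀` = {1111, 0001, 0010, 0011} of 4-bit patterns
(most significant bit first). -/
def V00 : Set (Bool × Bool × Bool × Bool) :=
  {(true, true, true, true), (false, false, false, true),
   (false, false, true, false), (false, false, true, true)}

/-- The adjacency condition of the simplified shuffle-cube: either the two
strings agree everywhere except in exactly one of the bits in positions `1`
and `0`, or there is a `j` with `1 ≤ j ≤ (n-2)/4` such that the strings agree
outside the positions `4j-2, …, 4j+1` and the bitwise XOR of the `j`-th 4-bit
blocks lies in `V₀₀`. -/
def ssqRel (n : ℕ) (u v : ℕ → Bool) : Prop :=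
  ((∀ i, 2 ≤ i → u i = v i) ∧ ((u 0 = v 0) ↔ ¬ (u 1 = v 1))) ∨
  (∃ j, 1 ≤ j ∧ j ≤ (n - 2) / 4 ∧
    (∀ i, (i < 4 * j - 2 ∨ 4 * j + 1 < i) → u i = v i) ∧
    (xor (u (4 * j + 1)) (v (4 * j + 1)), xor (u (4 * j)) (v (4 * j)),
     xor (u (4 * j - 1)) (v (4 * j - 1)), xor (u (4 * j - 2)) (v (4 * j - 2))) ∈ V00)

/-- The `n`-dimensional simplified shuffle-cube `SSQ_n`. -/
def SSQ (n : ℕ) : SimpleGraph (SSQVertex n) :=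
  SimpleGraph.fromRel (fun u v => ssqRel n u.1 v.1)

noncomputable instance (n : ℕ) : DecidableEq (SSQVertex n) := Classical.decEq _

/-!
Splitting off the top block of four bits gives `SSQ_{n+4} ≅ (K₄ □ K₂) □ SSQ_n`, and
`SSQ_2 ≅ K₂ □ K₂`. The box product `G □ H` of a Hamiltonian-connected graph `G` on at least three
vertices with a nontrivial Hamiltonian-connected graph `H` is Hamiltonian-connected. Between
different `H`-coordinates, snake through the copies of `G` along a Hamiltonian path of `H`. Between
`(x, a)` and `(y, a)`, step from `(x, a)` into another copy, snake through the copies over `H - a`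
along a Hamiltonian path of `H` from `a` to a neighbour of `a`, come back to `(x', a)` for the
successor `x'` of `x` on a Hamiltonian `x`–`y` path of `G`, and finish along that path. Hence
`K₄ □ K₂` and `SSQ_6 ≅ ((K₄ □ K₂) □ K₂) □ K₂` are Hamiltonian-connected, and so, by induction, is
every `SSQ_{4t+6} ≅ (K₄ □ K₂) □ SSQ_{4t+2}`.
-/

namespace SimpleGraph

variable {V W : Type*} [DecidableEq V] [DecidableEq W] {G : SimpleGraph V} {H : SimpleGraph W}

@[simp]
theorem Walk.isHamiltonian_copy {u v u' v' : V} (p : G.Walk u v) (hu : u = u') (hv : v = v') :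
    (p.copy hu hv).IsHamiltonian ↔ p.IsHamiltonian := by
  subst hu hv; rfl

/-- On the right, `count` uses the componentwise `BEq` instance of `V × W`, which is not the one
`IsHamiltonian` is stated with. -/
theorem Walk.isHamiltonian_prod_iff {G : SimpleGraph (V × W)} {u v : V × W} (p : G.Walk u v) :
    p.IsHamiltonian ↔ ∀ g h, p.support.count (g, h) = 1 :=
  ⟨fun hp g h => by convert hp (g, h), fun hp z => by convert hp z.1 z.2⟩

theorem Walk.count_support_boxProdLeft {x y : V} (p : G.Walk x y) (h : W) (g : V) (h' : W) :
    (p.boxProdLeft H h).support.count (g, h') = if h' = h then p.support.count g else 0 := by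
  rw [show (p.boxProdLeft H h).support = p.support.map (·, h) from p.support_map _]
  split_ifs with hh
  · subst hh
    exact List.count_map_of_injective _ _ (Prod.mk_left_injective _) _
  · exact List.count_eq_zero_of_not_mem (by simp [Ne.symm hh])

def Iso.boxProdCongr {V' W' : Type*} {G' : SimpleGraph V'} {H' : SimpleGraph W'} (e₁ : G ≃g G')
    (e₂ : H ≃g H') : (G □ H) ≃g (G' □ H') where
  toEquiv := e₁.toEquiv.prodCongr e₂.toEquiv
  map_rel_iff' := by
    simp only [Equiv.prodCongr_apply, Prod.map, boxProd_adj, EmbeddingLike.apply_eq_iff_eq]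
    exact or_congr (and_congr_left' e₁.map_adj_iff) (and_congr_left' e₂.map_adj_iff)

def IsHamiltonianConnected (G : SimpleGraph V) : Prop :=
  ∀ ⦃u v : V⦄, u ≠ v → ∃ p : G.Walk u v, p.IsHamiltonian

theorem IsHamiltonianConnected.of_iso (e : G ≃g H) (hG : G.IsHamiltonianConnected) :
    H.IsHamiltonianConnected := by
  intro u v huv
  obtain ⟨p, hp⟩ := hG (e.symm.injective.ne huv)
  exact ⟨(p.map e.toHom).copy (by simp) (by simp), by simpa using hp.map e.toHom e.bijective⟩

theorem isHamiltonianConnected_top [Fintype V] : (⊤ : SimpleGraph V).IsHamiltonianConnected := by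
  intro u v huv
  set l := u :: (Finset.univ.toList.filter fun w => w ≠ u ∧ w ≠ v) ++ [v] with hl
  have hnodup : l.Nodup := by
    simp [hl, List.nodup_append, Finset.nodup_toList, List.Nodup.filter, huv]
  have hchain : l.IsChain (⊤ : SimpleGraph V).Adj :=
    (List.nodup_iff_pairwise_ne.mp hnodup).isChain.imp fun _ _ h => h
  refine ⟨(Walk.ofSupport l (by simp [hl]) hchain).copy (by simp [hl]) (by simp [hl]), ?_⟩
  rw [Walk.isHamiltonian_copy]
  intro w
  rw [Walk.support_ofSupport]
  exact List.count_eq_one_of_mem hnodup (by simp [hl]; tauto)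

theorem IsHamiltonianConnected.exists_adj [Nontrivial V] (hG : G.IsHamiltonianConnected) (a : V) :
    ∃ b, G.Adj a b := by
  obtain ⟨c, hc⟩ := exists_ne a
  obtain ⟨p, -⟩ := hG hc.symm
  exact ⟨p.snd, p.adj_snd (Walk.not_nil_of_ne hc.symm)⟩

/-- The snake: cross the copies `G × {h}` in the order in which `P` visits them, each along a
Hamiltonian path of `G`, leaving every copy but the last at a third vertex, different from the
entry point and from `y`. -/
theorem IsHamiltonianConnected.exists_walk_boxProd (hG : G.IsHamiltonianConnected)
    (hV : 3 ≤ ENat.card V) {a b : W} (P : H.Walk a b) (x y : V) (hxy : x ≠ y ∨ ¬P.Nil) :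
    ∃ Q : (G □ H).Walk (x, a) (y, b), ∀ g h, Q.support.count (g, h) = P.support.count h := by
  induction P generalizing x with
  | nil =>
    obtain ⟨R, hR⟩ := hG (hxy.resolve_right (by simp))
    refine ⟨R.boxProdLeft H _, fun g h => ?_⟩
    simp only [Walk.count_support_boxProdLeft, hR g, Walk.support_nil, List.count_singleton]
    grind
  | @cons a a' b hadj P ih =>
    obtain ⟨w, hwx, hwy⟩ := ENat.exists_ne_ne_of_three_le hV x y
    obtain ⟨R, hR⟩ := hG hwx.symm
    obtain ⟨Q, hQ⟩ := ih w (.inl hwy)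
    refine ⟨(R.boxProdLeft H a).append (.cons (boxProd_adj_right.mpr hadj) Q), fun g h => ?_⟩
    simp only [Walk.support_append, Walk.support_cons, List.tail_cons, List.count_append, hQ,
      Walk.count_support_boxProdLeft, hR g, List.count_cons, beq_iff_eq]
    grind

theorem IsHamiltonianConnected.boxProd [Nontrivial W] (hG : G.IsHamiltonianConnected)
    (hH : H.IsHamiltonianConnected) (hV : 3 ≤ ENat.card V) : (G □ H).IsHamiltonianConnected := by
  rintro ⟨x, a⟩ ⟨y, b⟩ hne
  by_cases hab : a = b
  · subst hab
    have hxy : x ≠ y := fun h => hne (by rw [h])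
    obtain ⟨b, hb⟩ := hH.exists_adj a
    obtain ⟨_ | ⟨hxx', P⟩, hP⟩ := hG hxy
    · exact absurd rfl hxy
    obtain ⟨_ | ⟨hac, R⟩, hR⟩ := hH hb.ne
    · exact absurd rfl hb.ne
    -- `(x, a) → (x, c) ⇝ (x', b) → (x', a) ⇝ (y, a)`, the middle part covering `G × (H - a)`
    obtain ⟨Q, hQ⟩ := hG.exists_walk_boxProd hV R x _ (.inl hxx'.ne)
    refine ⟨.cons (boxProd_adj_right.mpr hac)
      (Q.append (.cons (boxProd_adj_right.mpr hb.symm) (P.boxProdLeft H a))),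
      (Walk.isHamiltonian_prod_iff _).mpr fun g h => ?_⟩
    have hPg := hP g
    have hRh := hR h
    simp only [Walk.support_cons, List.count_cons] at hPg hRh
    simp only [Walk.support_cons, Walk.support_append, List.tail_cons, List.count_cons,
      List.count_append, hQ, Walk.count_support_boxProdLeft]
    grind
  · obtain ⟨R, hR⟩ := hH hab
    obtain ⟨Q, hQ⟩ := hG.exists_walk_boxProd hV R x y (.inr (Walk.not_nil_of_ne hab))
    exact ⟨Q, (Walk.isHamiltonian_prod_iff _).mpr fun g h => (hQ g h).trans (hR h)⟩

end SimpleGraph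

open SimpleGraph

namespace SSQ

def lowRel (u v : ℕ → Bool) : Prop :=
  (∀ i, 2 ≤ i → u i = v i) ∧ ((u 0 = v 0) ↔ ¬ (u 1 = v 1))

def blockXor (j : ℕ) (u v : ℕ → Bool) : Bool × Bool × Bool × Bool :=
  (xor (u (4 * j + 1)) (v (4 * j + 1)), xor (u (4 * j)) (v (4 * j)),
    xor (u (4 * j - 1)) (v (4 * j - 1)), xor (u (4 * j - 2)) (v (4 * j - 2)))

def blockRel (j : ℕ) (u v : ℕ → Bool) : Prop :=
  (∀ i, (i < 4 * j - 2 ∨ 4 * j + 1 < i) → u i = v i) ∧ blockXor j u v ∈ V00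

theorem ssqRel_iff {n : ℕ} {u v : ℕ → Bool} :
    ssqRel n u v ↔ lowRel u v ∨ ∃ j, 1 ≤ j ∧ j ≤ (n - 2) / 4 ∧ blockRel j u v :=
  Iff.rfl

def truncate (m : ℕ) (u : ℕ → Bool) (i : ℕ) : Bool := if i < m then u i else false

section Truncate

variable {m i : ℕ} {u v : ℕ → Bool}

theorem truncate_of_lt (h : i < m) : truncate m u i = u i := if_pos h

theorem truncate_of_le (h : m ≤ i) : truncate m u i = false := if_neg (by omega)

theorem forall_eq_iff_truncate {s : ℕ → Prop} (hs : ∀ i, m ≤ i → s i) :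
    (∀ i, s i → u i = v i) ↔
      (∀ i, s i → truncate m u i = truncate m v i) ∧ ∀ i, m ≤ i → u i = v i := by
  refine ⟨fun h => ⟨fun i hi => ?_, fun i hi => h i (hs i hi)⟩, fun ⟨h, h'⟩ i hi => ?_⟩
  · unfold truncate; split_ifs <;> simp [h i hi]
  · rcases lt_or_ge i m with him | him
    · simpa [truncate_of_lt him] using h i hi
    · exact h' i him

theorem lowRel_iff_truncate (hm : 2 ≤ m) :
    lowRel u v ↔ lowRel (truncate m u) (truncate m v) ∧ ∀ i, m ≤ i → u i = v i := by
  unfold lowRel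
  rw [forall_eq_iff_truncate (m := m) fun i hi => by omega]
  simp (disch := omega) only [truncate_of_lt]
  tauto

theorem blockRel_iff_truncate {j : ℕ} (hj : 4 * j + 1 < m) :
    blockRel j u v ↔ blockRel j (truncate m u) (truncate m v) ∧ ∀ i, m ≤ i → u i = v i := by
  unfold blockRel blockXor
  rw [forall_eq_iff_truncate (m := m) fun i hi => by omega]
  simp (disch := omega) only [truncate_of_lt]
  tauto

end Truncate

theorem ssqRel_four_mul_add_six_iff {t : ℕ} {u v : ℕ → Bool}
    (hu : ∀ i, 4 * t + 6 ≤ i → u i = false) (hv : ∀ i, 4 * t + 6 ≤ i → v i = false) :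
    ssqRel (4 * t + 6) u v ↔
      (ssqRel (4 * t + 2) (truncate (4 * t + 2) u) (truncate (4 * t + 2) v) ∧
          ∀ i, 4 * t + 2 ≤ i → u i = v i) ∨
        ((∀ i, i < 4 * t + 2 → u i = v i) ∧ blockXor (t + 1) u v ∈ V00) := by
  have hlow := lowRel_iff_truncate (u := u) (v := v) (m := 4 * t + 2) (by omega)
  have hmiddle : (∃ j, 1 ≤ j ∧ j ≤ t ∧ blockRel j u v) ↔
      (∃ j, 1 ≤ j ∧ j ≤ t ∧ blockRel j (truncate (4 * t + 2) u) (truncate (4 * t + 2) v)) ∧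
        ∀ i, 4 * t + 2 ≤ i → u i = v i := by
    constructor
    · rintro ⟨j, hj1, hjt, h⟩
      obtain ⟨h, hhigh⟩ := (blockRel_iff_truncate (m := 4 * t + 2) (by omega)).mp h
      exact ⟨⟨j, hj1, hjt, h⟩, hhigh⟩
    · rintro ⟨⟨j, hj1, hjt, h⟩, hhigh⟩
      exact ⟨j, hj1, hjt, (blockRel_iff_truncate (m := 4 * t + 2) (by omega)).mpr ⟨h, hhigh⟩⟩
  have htop : blockRel (t + 1) u v ↔
      (∀ i, i < 4 * t + 2 → u i = v i) ∧ blockXor (t + 1) u v ∈ V00 := by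
    refine and_congr_left' ⟨fun h i hi => h i (.inl (by omega)), fun h i hi => ?_⟩
    rcases hi with hi | hi
    · exact h i (by omega)
    · rw [hu i (by omega), hv i (by omega)]
  have hsplit : (∃ j, 1 ≤ j ∧ j ≤ t + 1 ∧ blockRel j u v) ↔
      (∃ j, 1 ≤ j ∧ j ≤ t ∧ blockRel j u v) ∨ blockRel (t + 1) u v := by
    constructor
    · rintro ⟨j, hj1, hjt, h⟩
      rcases Nat.lt_or_eq_of_le hjt with hjt | rfl
      · exact .inl ⟨j, hj1, by omega, h⟩
      · exact .inr h
    · rintro (⟨j, hj1, hjt, h⟩ | h)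
      · exact ⟨j, hj1, by omega, h⟩
      · exact ⟨t + 1, by omega, le_rfl, h⟩
  rw [ssqRel_iff, ssqRel_iff, show (4 * t + 6 - 2) / 4 = t + 1 by omega,
    show (4 * t + 2 - 2) / 4 = t by omega, hsplit, hlow, hmiddle, htop, or_and_right, or_assoc]

/-- A block `u_{4j+1} u_{4j} u_{4j-1} u_{4j-2} = c c a b` in the coordinates `((a ⊕ c, b ⊕ c), c)`:
the moves `0001, 0010, 0011` of `V₀₀` change `(a ⊕ c, b ⊕ c)` arbitrarily and fix `c`, while
`1111` flips `c` alone, so the block graph is `K₄ □ K₂`. -/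
abbrev blockGraph : SimpleGraph ((Bool × Bool) × Bool) := ⊤ □ ⊤

end SSQ

open SSQ

namespace SSQVertex

instance (n : ℕ) : Nonempty (SSQVertex n) := ⟨⟨fun _ => false, fun _ _ => rfl, fun _ _ _ => rfl⟩⟩

def twoEquiv : SSQVertex 2 ≃ Bool × Bool where
  toFun u := (u.1 1, u.1 0)
  invFun x := ⟨fun i => if i = 0 then x.2 else if i = 1 then x.1 else false,
    fun i hi => by simp only; split_ifs <;> first | rfl | omega, fun j hj1 hj => by omega⟩
  left_inv u := Subtype.ext <| funext fun i => by
    simp only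
    split_ifs with h0 h1
    · rw [h0]
    · rw [h1]
    · exact (u.2.1 i (by omega)).symm
  right_inv x := rfl

theorem ssqRel_two_iff {u v : SSQVertex 2} :
    ssqRel 2 u.1 v.1 ↔ (u.1 0 = v.1 0 ↔ ¬ u.1 1 = v.1 1) := by
  rw [ssqRel_iff, lowRel]
  refine ⟨fun h => ?_, fun h => .inl ⟨fun i hi => by rw [u.2.1 i hi, v.2.1 i hi], h⟩⟩
  rcases h with h | ⟨j, hj1, hj, -⟩
  · exact h.2
  · omega

variable {t : ℕ}

theorem bit_four_mul_add_five (u : SSQVertex (4 * t + 6)) : u.1 (4 * t + 5) = u.1 (4 * t + 4) :=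
  u.2.2 (t + 1) (by omega) (by omega)

def low (u : SSQVertex (4 * t + 6)) : SSQVertex (4 * t + 2) :=
  ⟨truncate (4 * t + 2) u.1, fun _ hi => truncate_of_le hi, fun j hj1 hjt => by
    rw [truncate_of_lt (by omega), truncate_of_lt (by omega)]
    exact u.2.2 j hj1 (by omega)⟩

def high (u : SSQVertex (4 * t + 6)) : (Bool × Bool) × Bool :=
  ((xor (u.1 (4 * t + 3)) (u.1 (4 * t + 4)), xor (u.1 (4 * t + 2)) (u.1 (4 * t + 4))),
    u.1 (4 * t + 4))

def ofHighLow (x : (Bool × Bool) × Bool) (w : SSQVertex (4 * t + 2)) : SSQVertex (4 * t + 6) :=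
  ⟨fun i => if i < 4 * t + 2 then w.1 i else if i = 4 * t + 2 then xor x.1.2 x.2
    else if i = 4 * t + 3 then xor x.1.1 x.2 else if i < 4 * t + 6 then x.2 else false,
  fun i hi => by simp only; split_ifs <;> first | rfl | omega,
  fun j hj1 hjt => by
    rcases Nat.lt_or_eq_of_le (show j ≤ t + 1 by omega) with hj | rfl
    · simp only [if_pos (show 4 * j + 1 < 4 * t + 2 by omega),
        if_pos (show 4 * j < 4 * t + 2 by omega)]
      exact w.2.2 j hj1 (by omega)
    · simp only; split_ifs <;> first | rfl | omega⟩

def splitEquiv : SSQVertex (4 * t + 6) ≃ ((Bool × Bool) × Bool) × SSQVertex (4 * t + 2) where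
  toFun u := (high u, low u)
  invFun x := ofHighLow x.1 x.2
  left_inv u := Subtype.ext <| funext fun i => by
    simp only [ofHighLow, high, low, truncate]
    split_ifs with hlow h2 h3 hhigh
    · rfl
    · simp [h2]
    · simp [h3]
    · obtain rfl | rfl : i = 4 * t + 4 ∨ i = 4 * t + 5 := by omega
      exacts [rfl, (bit_four_mul_add_five u).symm]
    · exact (u.2.1 i (by omega)).symm
  right_inv x := by
    refine Prod.ext ?_ (Subtype.ext (funext fun i => ?_))
    · simp [high, ofHighLow]
    · simp only [low, ofHighLow, truncate]
      split_ifs with hi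
      · rfl
      · exact (x.2.2.1 i (by omega)).symm

theorem low_eq_low_iff {u v : SSQVertex (4 * t + 6)} :
    low u = low v ↔ ∀ i, i < 4 * t + 2 → u.1 i = v.1 i := by
  refine ⟨fun h i hi => ?_, fun h => Subtype.ext (funext fun i => ?_)⟩
  · simpa [low, truncate_of_lt hi] using congrFun (congrArg Subtype.val h) i
  · simp only [low, truncate]
    split_ifs with hi <;> simp [h, hi]

theorem high_eq_high_iff {u v : SSQVertex (4 * t + 6)} :
    high u = high v ↔ ∀ i, 4 * t + 2 ≤ i → u.1 i = v.1 i := by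
  have key : ∀ a b c a' b' c' : Bool,
      ((xor a c, xor b c), c) = ((xor a' c', xor b' c'), c') ↔ a = a' ∧ b = b' ∧ c = c' := by
    decide
  rw [high, high, key]
  refine ⟨fun ⟨h3, h2, h4⟩ i hi => ?_, fun h => ⟨h _ (by omega), h _ (by omega), h _ (by omega)⟩⟩
  obtain rfl | rfl | rfl | rfl | hi : i = 4 * t + 2 ∨ i = 4 * t + 3 ∨ i = 4 * t + 4 ∨
    i = 4 * t + 5 ∨ 4 * t + 6 ≤ i := by omega
  · exact h2
  · exact h3
  · exact h4
  · rw [bit_four_mul_add_five, bit_four_mul_add_five, h4]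
  · rw [u.2.1 i hi, v.2.1 i hi]

theorem blockXor_mem_V00_iff {u v : SSQVertex (4 * t + 6)} :
    blockXor (t + 1) u.1 v.1 ∈ V00 ↔ blockGraph.Adj (high u) (high v) := by
  have key : ∀ a b c a' b' c' : Bool,
      (xor c c', xor c c', xor a a', xor b b') ∈ V00 ↔
        blockGraph.Adj ((xor a c, xor b c), c) ((xor a' c', xor b' c'), c') := by
    simp only [V00, Set.mem_insert_iff, Set.mem_singleton_iff, boxProd_adj, top_adj]
    decide
  rw [blockXor, show 4 * (t + 1) - 1 = 4 * t + 3 by omega, show 4 * (t + 1) - 2 = 4 * t + 2 by omega,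
    show 4 * (t + 1) + 1 = 4 * t + 5 by ring, show 4 * (t + 1) = 4 * t + 4 by ring,
    bit_four_mul_add_five u, bit_four_mul_add_five v, key]
  rfl

theorem ssqRel_iff_high_low {u v : SSQVertex (4 * t + 6)} :
    ssqRel (4 * t + 6) u.1 v.1 ↔
      (ssqRel (4 * t + 2) u.low.1 v.low.1 ∧ u.high = v.high) ∨
        (u.low = v.low ∧ blockGraph.Adj u.high v.high) := by
  rw [ssqRel_four_mul_add_six_iff u.2.1 v.2.1, high_eq_high_iff, low_eq_low_iff,
    blockXor_mem_V00_iff]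
  rfl

end SSQVertex

namespace SSQ

def twoIso : SSQ 2 ≃g (⊤ : SimpleGraph Bool) □ (⊤ : SimpleGraph Bool) where
  toEquiv := SSQVertex.twoEquiv
  map_rel_iff' {u v} := by
    have key : ∀ a b a' b' : Bool, ((⊤ : SimpleGraph Bool) □ ⊤).Adj (a, b) (a', b') ↔
        (a, b) ≠ (a', b') ∧ ((b = b' ↔ ¬ a = a') ∨ (b' = b ↔ ¬ a' = a)) := by
      simp only [boxProd_adj, top_adj]
      decide
    rw [SSQ, fromRel_adj, SSQVertex.ssqRel_two_iff, SSQVertex.ssqRel_two_iff,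
      ← SSQVertex.twoEquiv.injective.ne_iff]
    exact key _ _ _ _

def splitIso (t : ℕ) : SSQ (4 * t + 6) ≃g blockGraph □ SSQ (4 * t + 2) where
  toEquiv := SSQVertex.splitEquiv
  map_rel_iff' {u v} := by
    have hne : u ≠ v ↔ u.high ≠ v.high ∨ u.low ≠ v.low := by
      rw [← not_and_or, ← Prod.mk.injEq, Ne, not_iff_not]
      exact SSQVertex.splitEquiv.apply_eq_iff_eq.symm
    have hB : blockGraph.Adj u.high v.high → u.high ≠ v.high := Adj.ne
    change (blockGraph □ SSQ (4 * t + 2)).Adj (u.high, u.low) (v.high, v.low) ↔ _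
    rw [boxProd_adj]
    simp only [SSQ, fromRel_adj, SSQVertex.ssqRel_iff_high_low, hne, eq_comm (a := v.high),
      eq_comm (a := v.low), blockGraph.adj_comm v.high]
    tauto

theorem isHamiltonianConnected_blockGraph : blockGraph.IsHamiltonianConnected :=
  isHamiltonianConnected_top.boxProd isHamiltonianConnected_top (by norm_num)

theorem isHamiltonianConnected_four_mul_add_six (t : ℕ) :
    (SSQ (4 * t + 6)).IsHamiltonianConnected := by
  induction t with
  | zero =>
    have hK₂ : (⊤ : SimpleGraph Bool).IsHamiltonianConnected := isHamiltonianConnected_top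
    have h := (isHamiltonianConnected_blockGraph.boxProd hK₂ (by norm_num)).boxProd hK₂
      (by norm_num)
    exact h.of_iso ((splitIso 0).trans ((Iso.refl.boxProdCongr twoIso).trans
      (boxProdAssoc _ _ _).symm)).symm
  | succ t ih =>
    have : Nontrivial (SSQVertex (4 * t + 6)) := SSQVertex.splitEquiv.nontrivial
    exact (isHamiltonianConnected_blockGraph.boxProd ih (by norm_num)).of_iso
      (splitIso (t + 1)).symm

end SSQ

/-- For every `n ≥ 6` with `n ≡ 2 (mod 4)`, the simplified shuffle-cube
`SSQ_n` is Hamiltonian-connected: any two distinct vertices are joined by a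
Hamiltonian path. -/
theorem ssq_hamiltonianConnected (n : ℕ) (hn : 6 ≤ n) (hmod : n % 4 = 2)
    (u v : SSQVertex n) (huv : u ≠ v) :
    ∃ p : (SSQ n).Walk u v, p.IsHamiltonian := by
  obtain ⟨t, rfl⟩ : ∃ t, n = 4 * t + 6 := ⟨(n - 6) / 4, by omega⟩
  exact SSQ.isHamiltonianConnected_four_mul_add_six t huv
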